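/- Let g, γ, w, Γ₋ be invertible matrix Laurent series with Γ₋ = w⁻¹g and J = g⁻¹γ, where g has only nonnegative powers of z. Then Res_z Tr(Γ₋⁻¹ (∂_z Γ₋) · (∂_t J) J⁻¹) = Res_z Tr((∂_z w) w⁻¹ (∂_t g) g⁻¹), i.e. the Jimbo–Miwa–Ueno logarithmic derivative formula (2.23) equals the Baker-function formula (2.24). -/

import Mathlib

open LaurentPolynomial

/-- Formal `z`-derivative of a Laurent polynomial. -/
noncomputable def lderiv {S : Type*} [CommRing S] (p : LaurentPolynomial S) :
    LaurentPolynomial S :=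
  p.coeff.sum fun k a => LaurentPolynomial.C (k • a) * LaurentPolynomial.T (k - 1)

/-- Coefficientwise extension of a `t`-derivation `dt` on the coefficient ring
to Laurent polynomials in `z`. -/
noncomputable def tderiv {S : Type*} [CommRing S] (dt : S → S)
    (p : LaurentPolynomial S) : LaurentPolynomial S :=
  p.coeff.sum fun k a => LaurentPolynomial.C (dt a) * LaurentPolynomial.T k

/-!
The Leibniz rule for the entrywise derivations `∂_z`, `∂_t` gives `∂(A⁻¹) = -A⁻¹ (∂A) A⁻¹`, hence
`(∂_t J) J⁻¹ = -g⁻¹ ∂_t g` (since `∂_t γ = 0`) and `Γ₋⁻¹ ∂_z Γ₋ = -g⁻¹ (∂_z w) w⁻¹ g + g⁻¹ ∂_z g`.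
By cyclicity of the trace, the left-hand side is therefore the right-hand side minus
`Res_z Tr(g⁻¹ (∂_z g) g⁻¹ ∂_t g)`, and this residue vanishes because `g`, `g⁻¹` and their
derivatives contain no negative powers of `z`.
-/

namespace LaurentPolynomial

variable {S : Type*} [CommRing S]

theorem coeff_lderiv (p : S[T;T⁻¹]) (k : ℤ) :
    (lderiv p).coeff k = (k + 1) • p.coeff (k + 1) := by
  classical
  simp only [lderiv, ← single_eq_C_mul_T, Finsupp.sum, AddMonoidAlgebra.coeff_sum,
    AddMonoidAlgebra.coeff_single, Finsupp.finsetSum_apply, Finsupp.single_apply,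
    sub_eq_iff_eq_add]
  rw [Finset.sum_ite_eq']
  split_ifs with h
  · rfl
  · rw [Finsupp.notMem_support_iff.mp h, smul_zero]

theorem coeff_tderiv {dt : S → S} (hdt : dt 0 = 0) (p : S[T;T⁻¹]) (k : ℤ) :
    (tderiv dt p).coeff k = dt (p.coeff k) := by
  classical
  simp only [tderiv, ← single_eq_C_mul_T, Finsupp.sum, AddMonoidAlgebra.coeff_sum,
    AddMonoidAlgebra.coeff_single, Finsupp.finsetSum_apply, Finsupp.single_apply]
  rw [Finset.sum_ite_eq']
  split_ifs with h
  · rfl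
  · rw [Finsupp.notMem_support_iff.mp h, hdt]

theorem lderiv_add (p q : S[T;T⁻¹]) : lderiv (p + q) = lderiv p + lderiv q := by
  ext k
  simp only [coeff_lderiv, AddMonoidAlgebra.coeff_add, Finsupp.add_apply, smul_add]

theorem tderiv_add {dt : S → S} (hdt : ∀ a b, dt (a + b) = dt a + dt b) (p q : S[T;T⁻¹]) :
    tderiv dt (p + q) = tderiv dt p + tderiv dt q := by
  have hdt0 : dt 0 = 0 := (AddMonoidHom.mk' dt hdt).map_zero
  ext k
  simp only [coeff_tderiv hdt0, AddMonoidAlgebra.coeff_add, Finsupp.add_apply, hdt]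

theorem lderiv_C_mul_T (a : S) (k : ℤ) : lderiv (C a * T k) = C (k • a) * T (k - 1) := by
  rw [lderiv, ← single_eq_C_mul_T, AddMonoidAlgebra.coeff_single, Finsupp.sum_single_index]
  simp

theorem tderiv_C_mul_T {dt : S → S} (hdt : dt 0 = 0) (a : S) (k : ℤ) :
    tderiv dt (C a * T k) = C (dt a) * T k := by
  rw [tderiv, ← single_eq_C_mul_T, AddMonoidAlgebra.coeff_single, Finsupp.sum_single_index]
  simp [hdt]

theorem C_mul_T_mul_C_mul_T (a b : S) (k l : ℤ) :
    C a * T k * (C b * T l) = C (a * b) * T (k + l) := by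
  rw [map_mul, T_add]
  ring

noncomputable def derivationOfMonomialLeibniz (f : S[T;T⁻¹] →+ S[T;T⁻¹])
    (hf : ∀ (a b : S) (k l : ℤ), f (C a * T k * (C b * T l)) =
      f (C a * T k) * (C b * T l) + C a * T k * f (C b * T l)) :
    Derivation ℤ S[T;T⁻¹] S[T;T⁻¹] :=
  Derivation.mk' f.toIntLinearMap fun p q => by
    simp only [AddMonoidHom.coe_toIntLinearMap, smul_eq_mul]
    induction p using LaurentPolynomial.induction_on' with
    | add p₁ p₂ h₁ h₂ => simp only [add_mul, map_add, h₁, h₂]; ring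
    | C_mul_T k a =>
      induction q using LaurentPolynomial.induction_on' with
      | add q₁ q₂ h₁ h₂ => simp only [mul_add, map_add, h₁, h₂]; ring
      | C_mul_T l b => rw [hf]; ring

noncomputable def lderivDerivation : Derivation ℤ S[T;T⁻¹] S[T;T⁻¹] :=
  derivationOfMonomialLeibniz (AddMonoidHom.mk' lderiv lderiv_add) fun a b k l => by
    simp only [AddMonoidHom.mk'_apply, C_mul_T_mul_C_mul_T, lderiv_C_mul_T]
    rw [sub_add_eq_add_sub, add_sub_assoc', ← add_mul, ← map_add, add_smul, smul_mul_assoc,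
      mul_smul_comm]

@[simp]
theorem coe_lderivDerivation : ⇑(lderivDerivation : Derivation ℤ S[T;T⁻¹] S[T;T⁻¹]) = lderiv :=
  rfl

noncomputable def tderivDerivation (dt : S → S) (hdt_add : ∀ a b, dt (a + b) = dt a + dt b)
    (hdt_mul : ∀ a b, dt (a * b) = dt a * b + a * dt b) : Derivation ℤ S[T;T⁻¹] S[T;T⁻¹] :=
  have hdt0 : dt 0 = 0 := (AddMonoidHom.mk' dt hdt_add).map_zero
  derivationOfMonomialLeibniz (AddMonoidHom.mk' (tderiv dt) (tderiv_add hdt_add)) fun a b k l => by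
    simp only [AddMonoidHom.mk'_apply, C_mul_T_mul_C_mul_T, tderiv_C_mul_T hdt0, hdt_mul,
      map_add, add_mul]

@[simp]
theorem coe_tderivDerivation (dt : S → S) (hdt_add : ∀ a b, dt (a + b) = dt a + dt b)
    (hdt_mul : ∀ a b, dt (a * b) = dt a * b + a * dt b) :
    ⇑(tderivDerivation dt hdt_add hdt_mul) = tderiv dt :=
  rfl

variable (S) in
def nonnegSubring : Subring S[T;T⁻¹] where
  carrier := {p | ∀ k < 0, p.coeff k = 0}
  zero_mem' _ _ := rfl
  one_mem' k hk := by simp [← T_zero, hk.ne']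
  add_mem' hp hq k hk := by simp [AddMonoidAlgebra.coeff_add, hp k hk, hq k hk]
  neg_mem' hp k hk := by simp [AddMonoidAlgebra.coeff_neg, hp k hk]
  mul_mem' {p q} hp hq k hk := by
    classical
    by_contra hpq
    obtain ⟨i, hi, j, hj, rfl⟩ := Finset.mem_add.mp <|
      AddMonoidAlgebra.support_coeff_mul_subset p q (Finsupp.mem_support_iff.mpr hpq)
    have hi₀ : 0 ≤ i := not_lt.mp fun h => Finsupp.mem_support_iff.mp hi (hp i h)
    have hj₀ : 0 ≤ j := not_lt.mp fun h => Finsupp.mem_support_iff.mp hj (hq j h)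
    omega

theorem lderiv_mem_nonnegSubring {p : S[T;T⁻¹]} (hp : p ∈ nonnegSubring S) :
    lderiv p ∈ nonnegSubring S := by
  intro k hk
  rw [coeff_lderiv]
  rcases (show k + 1 < 0 ∨ k + 1 = 0 by omega) with h | h
  · rw [hp _ h, smul_zero]
  · rw [h, zero_smul]

theorem tderiv_mem_nonnegSubring {dt : S → S} (hdt : dt 0 = 0) {p : S[T;T⁻¹]}
    (hp : p ∈ nonnegSubring S) : tderiv dt p ∈ nonnegSubring S := by
  intro k hk
  rw [coeff_tderiv hdt, hp k hk, hdt]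

end LaurentPolynomial

namespace Matrix

variable {R₀ R : Type*} [CommSemiring R₀] [CommRing R] [Algebra R₀ R] (D : Derivation R₀ R R)

theorem map_derivation_mul {l m n : Type*} [Fintype m] (A : Matrix l m R) (B : Matrix m n R) :
    (A * B).map D = A.map D * B + A * B.map D := by
  ext i j
  simp only [map_apply, mul_apply, add_apply, map_sum, Derivation.leibniz, smul_eq_mul,
    ← Finset.sum_add_distrib]
  exact Finset.sum_congr rfl fun k _ => by ring

variable {m : Type*} [Fintype m] [DecidableEq m]

omit [Fintype m] in
theorem map_derivation_one : (1 : Matrix m m R).map D = 0 := by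
  ext i j
  rcases eq_or_ne i j with rfl | h <;> simp [*]

theorem map_derivation_ringInverse {A : Matrix m m R} (hA : IsUnit A) :
    (Ring.inverse A).map D = -(Ring.inverse A * A.map D * Ring.inverse A) := by
  have h : A.map D * Ring.inverse A + A * (Ring.inverse A).map D = 0 := by
    rw [← map_derivation_mul, Ring.mul_inverse_cancel A hA, map_derivation_one]
  rw [eq_neg_iff_add_eq_zero, ← Ring.inverse_mul_cancel_left A ((Ring.inverse A).map D) hA,
    mul_assoc, ← mul_add, add_comm, h, mul_zero]

theorem ringInverse_mul_map_derivation_ringInverse_mul {w g : Matrix m m R} (hw : IsUnit w) :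
    Ring.inverse (Ring.inverse w * g) * (Ring.inverse w * g).map D =
      -(Ring.inverse g * (w.map D * Ring.inverse w) * g) + Ring.inverse g * g.map D := by
  rw [Ring.inverse_mul (.inl hw.ringInverse), Ring.inverse_inverse hw, map_derivation_mul,
    map_derivation_ringInverse D hw]
  simp only [mul_add, mul_neg, neg_mul, mul_assoc, Ring.mul_inverse_cancel_left _ _ hw]

theorem map_derivation_ringInverse_mul_mul_ringInverse {g γ : Matrix m m R} (hg : IsUnit g)
    (hγ : IsUnit γ) (hγD : γ.map D = 0) :
    (Ring.inverse g * γ).map D * Ring.inverse (Ring.inverse g * γ) =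
      -(Ring.inverse g * g.map D) := by
  rw [Ring.inverse_mul (.inl hg.ringInverse), Ring.inverse_inverse hg, map_derivation_mul, hγD,
    mul_zero, add_zero, map_derivation_ringInverse D hg]
  simp only [neg_mul, mul_assoc, Ring.mul_inverse_cancel_left _ _ hγ,
    Ring.inverse_mul_cancel g hg, mul_one]

theorem trace_ringInverse_mul_map_mul_map_mul_ringInverse (D₁ D₂ : Derivation R₀ R R)
    {g γ w : Matrix m m R} (hg : IsUnit g) (hγ : IsUnit γ) (hw : IsUnit w) (hγD₂ : γ.map D₂ = 0) :
    trace (Ring.inverse (Ring.inverse w * g) * (Ring.inverse w * g).map D₁ *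
        (Ring.inverse g * γ).map D₂ * Ring.inverse (Ring.inverse g * γ)) =
      trace (w.map D₁ * Ring.inverse w * g.map D₂ * Ring.inverse g) -
        trace (Ring.inverse g * g.map D₁ * (Ring.inverse g * g.map D₂)) := by
  rw [mul_assoc _ _ (Ring.inverse _),
    map_derivation_ringInverse_mul_mul_ringInverse D₂ hg hγ hγD₂,
    ringInverse_mul_map_derivation_ringInverse_mul D₁ hw, add_mul, neg_mul_neg, mul_neg,
    trace_add, trace_neg, ← sub_eq_add_neg, mul_assoc _ g, Ring.mul_inverse_cancel_left g _ hg,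
    mul_assoc (Ring.inverse g), trace_mul_comm (Ring.inverse g)]

theorem trace_mem_of_mem_matrix {P : Subring R} {A : Matrix m m R} (hA : A ∈ P.matrix) :
    trace A ∈ P :=
  P.sum_mem fun i _ => hA i i

end Matrix

/-- Corollary 2.10 of Cafasso–Wu: with `Γ₋ = w⁻¹g`, `J = g⁻¹γ`, `g` having
only nonnegative powers of `z` (as does its inverse) and `γ` independent of
`t`, the Jimbo–Miwa–Ueno logarithmic derivative equals the Baker-function
formula:
`Res_z Tr(Γ₋⁻¹ (∂_z Γ₋)(∂_t J)J⁻¹) = Res_z Tr((∂_z w) w⁻¹ (∂_t g) g⁻¹)`. -/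
theorem JMU_equals_baker_formula {S : Type*} [CommRing S] {n : ℕ}
    (dt : S → S)
    (hdt_add : ∀ a b : S, dt (a + b) = dt a + dt b)
    (hdt_mul : ∀ a b : S, dt (a * b) = dt a * b + a * dt b)
    (g γ w : Matrix (Fin n) (Fin n) (LaurentPolynomial S))
    (hg : IsUnit g) (hγ : IsUnit γ) (hw : IsUnit w)
    -- `g` and `g⁻¹` have only nonnegative powers of `z`
    (hgpos : ∀ (i j : Fin n) (k : ℤ), k < 0 → (g i j).coeff k = 0)
    (hginvpos : ∀ (i j : Fin n) (k : ℤ), k < 0 → ((Ring.inverse g) i j).coeff k = 0)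
    -- `γ` is independent of `t`
    (hγt : γ.map (tderiv dt) = 0) :
    (Matrix.trace
      (Ring.inverse (Ring.inverse w * g) * (Ring.inverse w * g).map lderiv *
        (Ring.inverse g * γ).map (tderiv dt) * Ring.inverse (Ring.inverse g * γ))).coeff
        (-1)
      = (Matrix.trace
          (w.map lderiv * Ring.inverse w * g.map (tderiv dt) * Ring.inverse g)).coeff
          (-1) := by
  have hdt0 : dt 0 = 0 := (AddMonoidHom.mk' dt hdt_add).map_zero
  let P := nonnegSubring S
  have hgP : g ∈ P.matrix := hgpos
  have hginvP : Ring.inverse g ∈ P.matrix := hginvpos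
  have hcorrection : Ring.inverse g * g.map lderiv * (Ring.inverse g * g.map (tderiv dt)) ∈
      P.matrix :=
    P.matrix.mul_mem (P.matrix.mul_mem hginvP fun i j => lderiv_mem_nonnegSubring (hgP i j))
      (P.matrix.mul_mem hginvP fun i j => tderiv_mem_nonnegSubring hdt0 (hgP i j))
  have hjmu := Matrix.trace_ringInverse_mul_map_mul_map_mul_ringInverse lderivDerivation
    (tderivDerivation dt hdt_add hdt_mul) hg hγ hw hγt
  simp only [coe_lderivDerivation, coe_tderivDerivation] at hjmu
  rw [hjmu, AddMonoidAlgebra.coeff_sub, Finsupp.sub_apply,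
    Matrix.trace_mem_of_mem_matrix hcorrection (-1) neg_one_lt_zero, sub_zero]
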